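/- Let d ≥ 3 be an integer and let u, w : ℝ^d → ℝ be nonnegative measurable functions such that the function (x,y) ↦ (|x| + |y|)·u(x)·w(y)/|x−y|^{d−1} is integrable on ℝ^d × ℝ^d. Then the symmetrization identity ∬_{ℝ^d×ℝ^d} (x·(x−y))/|x−y|^d · (u(x)w(y) + u(y)w(x)) dy dx = ∬_{ℝ^d×ℝ^d} u(x)w(y)/|x−y|^{d−2} dy dx holds, where x·(x−y) denotes the Euclidean inner product. -/

import Mathlib

open MeasureTheory
open scoped RealInnerProductSpace

/-!
Write `k(x, y) = ⟪x, x - y⟫ / |x - y|^d`. Since `⟪x, x - y⟫ + ⟪y, y - x⟫ = |x - y|²`, the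
symmetrized kernel `k(x, y) + k(y, x)` is `|x - y|^{2-d}`. Swapping the variables in the
`u(y) w(x)` half of the left-hand side (Fubini) turns it into the integral of
`(k(x, y) + k(y, x)) u(x) w(y)`; the integrability hypothesis dominates both halves because
`|k(x, y)| ≤ (|x| + |y|) / |x - y|^{d-1}`.
-/

theorem integral_integral_mul_add_swap {α : Type*} [MeasurableSpace α] {μ : Measure α}
    [SFinite μ] {K F : α → α → ℝ}
    (h : Integrable (fun q : α × α => K q.1 q.2 * F q.1 q.2) (μ.prod μ))
    (h_swap : Integrable (fun q : α × α => K q.1 q.2 * F q.2 q.1) (μ.prod μ)) :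
    ∫ x, ∫ y, K x y * (F x y + F y x) ∂μ ∂μ = ∫ x, ∫ y, (K x y + K y x) * F x y ∂μ ∂μ := by
  have h_swap' : Integrable (fun q : α × α => K q.2 q.1 * F q.1 q.2) (μ.prod μ) := h_swap.swap
  have h_change : ∫ q, K q.1 q.2 * F q.2 q.1 ∂μ.prod μ = ∫ q, K q.2 q.1 * F q.1 q.2 ∂μ.prod μ :=
    integral_prod_swap fun q : α × α => K q.2 q.1 * F q.1 q.2
  calc ∫ x, ∫ y, K x y * (F x y + F y x) ∂μ ∂μ
      = ∫ q, K q.1 q.2 * F q.1 q.2 + K q.1 q.2 * F q.2 q.1 ∂μ.prod μ := by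
        simp only [mul_add]; exact (integral_prod _ (h.add h_swap)).symm
    _ = ∫ q, K q.1 q.2 * F q.1 q.2 + K q.2 q.1 * F q.1 q.2 ∂μ.prod μ := by
        rw [integral_add h h_swap, integral_add h h_swap', h_change]
    _ = ∫ x, ∫ y, (K x y + K y x) * F x y ∂μ ∂μ := by
        simp only [add_mul]; exact integral_prod _ (h.add h_swap')

section AttractionKernel

variable {E : Type*} [NormedAddCommGroup E] [InnerProductSpace ℝ E]

noncomputable def attractionKernel (n : ℕ) (x y : E) : ℝ := ⟪x, x - y⟫ / ‖x - y‖ ^ n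

theorem inner_sub_add_inner_sub_eq_norm_sq (x y : E) : ⟪x, x - y⟫ + ⟪y, y - x⟫ = ‖x - y‖ ^ 2 := by
  rw [← neg_sub x y, inner_neg_right, ← sub_eq_add_neg, ← inner_sub_left,
    real_inner_self_eq_norm_sq]

/- On the diagonal both sides vanish (`0⁻¹ = 0`), provided `n - 2 ≠ 0`. -/
theorem attractionKernel_add_swap {n : ℕ} (hn : 3 ≤ n) (x y : E) :
    attractionKernel n x y + attractionKernel n y x = (‖x - y‖ ^ (n - 2))⁻¹ := by
  rcases eq_or_ne x y with rfl | hxy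
  · simp [attractionKernel, zero_pow (by omega : n - 2 ≠ 0)]
  have hr : ‖x - y‖ ≠ 0 := norm_ne_zero_iff.2 (sub_ne_zero.2 hxy)
  have hsplit : ‖x - y‖ ^ n = ‖x - y‖ ^ (n - 2) * ‖x - y‖ ^ 2 := by
    rw [← pow_add, Nat.sub_add_cancel (by omega)]
  rw [attractionKernel, attractionKernel, norm_sub_rev y x, ← add_div,
    inner_sub_add_inner_sub_eq_norm_sq, hsplit]
  field_simp

theorem abs_attractionKernel_le {n : ℕ} (hn : 1 ≤ n) (x y : E) :
    |attractionKernel n x y| ≤ (‖x‖ + ‖y‖) / ‖x - y‖ ^ (n - 1) := by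
  rcases eq_or_ne x y with rfl | hxy
  · simp only [attractionKernel, sub_self, inner_zero_right, norm_zero, zero_div, abs_zero]
    positivity
  have hr : 0 < ‖x - y‖ := norm_pos_iff.2 (sub_ne_zero.2 hxy)
  have hsplit : ‖x - y‖ ^ n = ‖x - y‖ ^ (n - 1) * ‖x - y‖ := by
    rw [← pow_succ, Nat.sub_add_cancel hn]
  calc |attractionKernel n x y| = |⟪x, x - y⟫| / ‖x - y‖ ^ n := by
        rw [attractionKernel, abs_div, abs_of_pos (pow_pos hr n)]
    _ ≤ ‖x‖ * ‖x - y‖ / ‖x - y‖ ^ n := by gcongr; exact abs_real_inner_le_norm x _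
    _ = ‖x‖ / ‖x - y‖ ^ (n - 1) := by rw [hsplit]; field_simp
    _ ≤ (‖x‖ + ‖y‖) / ‖x - y‖ ^ (n - 1) := by gcongr; exact le_add_of_nonneg_right (norm_nonneg y)

variable [MeasurableSpace E] [BorelSpace E] [SecondCountableTopology E]

theorem measurable_attractionKernel (n : ℕ) :
    Measurable fun q : E × E => attractionKernel n q.1 q.2 := by
  unfold attractionKernel
  fun_prop

theorem MeasureTheory.Integrable.attractionKernel_mul {μ : Measure (E × E)} {n : ℕ} (hn : 1 ≤ n)
    {F : E × E → ℝ} (hF : AEStronglyMeasurable F μ)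
    (hint : Integrable (fun q => (‖q.1‖ + ‖q.2‖) / ‖q.1 - q.2‖ ^ (n - 1) * F q) μ) :
    Integrable (fun q => attractionKernel n q.1 q.2 * F q) μ := by
  refine hint.mono ((measurable_attractionKernel n).aestronglyMeasurable.mul hF)
    (ae_of_all _ fun q => ?_)
  rw [norm_mul, norm_mul]
  gcongr
  exact (abs_attractionKernel_le hn q.1 q.2).trans (le_abs_self _)

end AttractionKernel

theorem symmetrization_identity_general
    (d : ℕ) (hd : 3 ≤ d)
    (u w : EuclideanSpace ℝ (Fin d) → ℝ)
    (hu_meas : Measurable u) (hw_meas : Measurable w)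
    (hint : Integrable (fun q : EuclideanSpace ℝ (Fin d) × EuclideanSpace ℝ (Fin d) =>
      (‖q.1‖ + ‖q.2‖) * u q.1 * w q.2 / ‖q.1 - q.2‖ ^ (d - 1))) :
    (∫ x, ∫ y, ((inner ℝ x (x - y) : ℝ) / ‖x - y‖ ^ d) * (u x * w y + u y * w x)) =
      ∫ x, ∫ y, u x * w y / ‖x - y‖ ^ (d - 2) := by
  have hd1 : 1 ≤ d := by omega
  have hF : Integrable fun q : EuclideanSpace ℝ (Fin d) × EuclideanSpace ℝ (Fin d) =>
      (‖q.1‖ + ‖q.2‖) / ‖q.1 - q.2‖ ^ (d - 1) * (u q.1 * w q.2) :=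
    hint.congr (ae_of_all _ fun q => by ring)
  have hF_swap : Integrable fun q : EuclideanSpace ℝ (Fin d) × EuclideanSpace ℝ (Fin d) =>
      (‖q.1‖ + ‖q.2‖) / ‖q.1 - q.2‖ ^ (d - 1) * (u q.2 * w q.1) :=
    hF.swap.congr (ae_of_all _ fun q => by
      simp only [Function.comp_apply, Prod.fst_swap, Prod.snd_swap, norm_sub_rev q.2,
        add_comm ‖q.2‖])
  calc (∫ x, ∫ y, ((inner ℝ x (x - y) : ℝ) / ‖x - y‖ ^ d) * (u x * w y + u y * w x))
      = ∫ x, ∫ y, (attractionKernel d x y + attractionKernel d y x) * (u x * w y) :=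
        integral_integral_mul_add_swap (K := attractionKernel d) (F := fun x y => u x * w y)
          (hF.attractionKernel_mul hd1 (by fun_prop))
          (hF_swap.attractionKernel_mul hd1 (by fun_prop))
    _ = ∫ x, ∫ y, u x * w y / ‖x - y‖ ^ (d - 2) := by
        simp only [attractionKernel_add_swap hd, inv_mul_eq_div]

/-- For `d ≥ 3` and nonnegative measurable `u, w` such that
`(x,y) ↦ (|x|+|y|)u(x)w(y)/|x−y|^{d−1}` is integrable on `ℝ^d × ℝ^d`, one has the
symmetrization identity
`∬ (x·(x−y))/|x−y|^d (u(x)w(y)+u(y)w(x)) dy dx = ∬ u(x)w(y)/|x−y|^{d−2} dy dx`. -/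
theorem symmetrization_identity
    (d : ℕ) (hd : 3 ≤ d)
    (u w : EuclideanSpace ℝ (Fin d) → ℝ)
    (hu_meas : Measurable u) (hw_meas : Measurable w)
    (hu_nonneg : ∀ x, 0 ≤ u x) (hw_nonneg : ∀ x, 0 ≤ w x)
    (hint : Integrable (fun q : EuclideanSpace ℝ (Fin d) × EuclideanSpace ℝ (Fin d) =>
      (‖q.1‖ + ‖q.2‖) * u q.1 * w q.2 / ‖q.1 - q.2‖ ^ (d - 1))) :
    (∫ x, ∫ y, ((inner ℝ x (x - y) : ℝ) / ‖x - y‖ ^ d) * (u x * w y + u y * w x)) =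
      ∫ x, ∫ y, u x * w y / ‖x - y‖ ^ (d - 2) :=
  symmetrization_identity_general d hd u w hu_meas hw_meas hint
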